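/- arXiv:2405.02860 — 8 statements merged into one kernel-verified Lean document; each statement's English description precedes it below -/
import Mathlib

section
/- Let n ≥ 2, let h ∈ {1,…,n} and let ℓ be an integer with 3 ≤ ℓ and h + ℓ − 1 ≤ n, and let g be the directed arc (h, ℓ). Then ℓ · q({g}) = 2 · n!; that is, the number of linear orders on {1,…,n} under which the maximum of the ℓ-element interval Hod(g) = {h, h+1, …, h+ℓ−1} is an endpoint (h or h+ℓ−1) equals (2/ℓ) · n!. (This is the number of quasi-hereditary orderings of the directed Nakayama algebra KA_n/⟨g⟩ with one relation, a path of length ℓ.) -/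
/-!
Precomposing a ranking with the transposition of two elements `a, b` of the hood moves
the maximum of the hood from `a` to `b`, so each of its `ℓ` elements is the maximum under
equally many rankings, namely `n! / ℓ`. Exactly two of them, `h` and `h + ℓ - 1`, are
admissible.
-/

open Finset

namespace Equiv

lemma swap_apply_mem {α : Type*} [DecidableEq α] {S : Finset α} {a b v : α}
    (ha : a ∈ S) (hb : b ∈ S) (hv : v ∈ S) : swap a b v ∈ S := by
  rw [swap_apply_def]
  split_ifs <;> assumption

end Equiv

section MaxOfRanking

variable {α β : Type*} [Fintype α] [DecidableEq α] [Fintype β] [LinearOrder β]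

variable (β) in
def equivsMaxAt (S : Finset α) (a : α) : Finset (α ≃ β) :=
  {σ | ∀ v ∈ S, σ v ≤ σ a}

lemma swap_trans_mem_equivsMaxAt {S : Finset α} {a b : α} (ha : a ∈ S) (hb : b ∈ S)
    {σ : α ≃ β} (hσ : σ ∈ equivsMaxAt β S a) : (Equiv.swap a b).trans σ ∈ equivsMaxAt β S b := by
  simp only [equivsMaxAt, mem_filter, mem_univ, true_and] at hσ ⊢
  intro v hv
  simpa using hσ _ (Equiv.swap_apply_mem ha hb hv)

lemma card_equivsMaxAt_eq {S : Finset α} {a b : α} (ha : a ∈ S) (hb : b ∈ S) :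
    #(equivsMaxAt β S a) = #(equivsMaxAt β S b) :=
  card_nbij' (fun σ => (Equiv.swap a b).trans σ) (fun σ => (Equiv.swap a b).trans σ)
    (fun _ hσ => swap_trans_mem_equivsMaxAt ha hb hσ)
    (fun _ hσ => Equiv.swap_comm a b ▸ swap_trans_mem_equivsMaxAt hb ha hσ)
    (fun σ _ => by ext; simp) (fun σ _ => by ext; simp)

lemma pairwiseDisjoint_equivsMaxAt (S : Finset α) :
    (S : Set α).PairwiseDisjoint (equivsMaxAt β S) := by
  intro a ha b hb hab
  refine disjoint_left.2 fun σ hσa hσb => hab ?_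
  simp only [equivsMaxAt, mem_filter, mem_univ, true_and] at hσa hσb
  exact σ.injective (le_antisymm (hσb a ha) (hσa b hb))

lemma biUnion_equivsMaxAt {S T : Finset α} (hS : S.Nonempty) (hTS : T ⊆ S) :
    T.biUnion (equivsMaxAt β S) =
      ({σ | ∀ m ∈ S, (∀ v ∈ S, σ v ≤ σ m) → m ∈ T} : Finset (α ≃ β)) := by
  ext σ
  simp only [equivsMaxAt, mem_biUnion, mem_filter, mem_univ, true_and]
  constructor
  · rintro ⟨a, ha, hmax⟩ m hm hmmax
    rwa [σ.injective (le_antisymm (hmax m hm) (hmmax a (hTS ha)))]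
  · intro h
    obtain ⟨m, hm, hmmax⟩ := S.exists_max_image σ hS
    exact ⟨m, h m hm hmmax, hmmax⟩

/-- Under a uniformly random ranking, the maximum of `S` lies in `T ⊆ S` with
probability `#T / #S`. -/
theorem card_mul_card_filter_max_mem {S T : Finset α} (hTS : T ⊆ S) :
    #S * #({σ | ∀ m ∈ S, (∀ v ∈ S, σ v ≤ σ m) → m ∈ T} : Finset (α ≃ β)) =
      #T * Fintype.card (α ≃ β) := by
  obtain rfl | ⟨a, ha⟩ := S.eq_empty_or_nonempty
  · simp [subset_empty.1 hTS]
  have hsum (U : Finset α) (hUS : U ⊆ S) :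
      #(U.biUnion (equivsMaxAt β S)) = #U * #(equivsMaxAt β S a) := by
    rw [card_biUnion ((pairwiseDisjoint_equivsMaxAt S).subset hUS),
      sum_congr rfl fun b hb => card_equivsMaxAt_eq (hUS hb) ha, sum_const, smul_eq_mul]
  have hall : #(S.biUnion (equivsMaxAt β S)) = Fintype.card (α ≃ β) := by
    rw [biUnion_equivsMaxAt ⟨a, ha⟩ subset_rfl, filter_true_of_mem fun _ _ _ hm _ => hm,
      card_univ]
  rw [← biUnion_equivsMaxAt ⟨a, ha⟩ hTS, ← hall, hsum T hTS, hsum S subset_rfl]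
  ring

end MaxOfRanking

theorem directed_one_generator_count_general (n h ℓ : ℕ) (hh : 1 ≤ h)
    (hℓ : 3 ≤ ℓ) (hend : h + ℓ - 1 ≤ n) :
    ℓ * Nat.card {σ : {v : ℕ // v ∈ Finset.Icc 1 n} ≃ Fin n //
        ∀ m : {v : ℕ // v ∈ Finset.Icc 1 n},
          (m : ℕ) ∈ Finset.Icc h (h + ℓ - 1) →
          (∀ v : {v : ℕ // v ∈ Finset.Icc 1 n},
              (v : ℕ) ∈ Finset.Icc h (h + ℓ - 1) → σ v ≤ σ m) →
          ((m : ℕ) = h ∨ (m : ℕ) = h + ℓ - 1)} = 2 * Nat.factorial n := by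
  let hood := (Icc h (h + ℓ - 1)).subtype (· ∈ Icc 1 n)
  let ends := ({h, h + ℓ - 1} : Finset ℕ).subtype (· ∈ Icc 1 n)
  have hood_card : #hood = ℓ := by
    rw [card_subtype, filter_true_of_mem fun v hv => by simp only [mem_Icc] at hv ⊢; omega,
      Nat.card_Icc]
    omega
  have ends_card : #ends = 2 := by
    rw [card_subtype, filter_true_of_mem fun v hv => by
      simp only [mem_insert, mem_singleton, mem_Icc] at hv ⊢; omega, card_pair (by omega)]
  have ends_subset : ends ⊆ hood := fun v hv => by
    simp only [ends, hood, mem_subtype, mem_insert, mem_singleton, mem_Icc] at hv ⊢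
    omega
  have key := card_mul_card_filter_max_mem (β := Fin n) ends_subset
  rw [hood_card, ends_card, Fintype.card_equiv (Fintype.equivFinOfCardEq (by simp)),
    Fintype.card_coe, Nat.card_Icc, add_tsub_cancel_right] at key
  rw [Nat.card_eq_fintype_card, Fintype.card_subtype, ← key]
  congr 2
  ext σ
  simp only [hood, ends, mem_subtype, mem_insert, mem_singleton]

/-- for the directed Nakayama algebra `K A_n / ⟨g⟩` with one relation, a
path `g` of length `ℓ` from vertex `h` to vertex `h + ℓ - 1` (so `1 ≤ h`, `3 ≤ ℓ`,
`h + ℓ - 1 ≤ n`), the number of linear orders on `V = {1, …, n}` (encoded by ranking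
equivalences `σ : V ≃ Fin n`, with `v ≺ w` iff `σ v < σ w`) under which the maximum of
the hood `Hod(g) = {h, h+1, …, h+ℓ-1}` is an endpoint `h` or `h + ℓ - 1` equals
`(2/ℓ) ⬝ n!`, i.e. `ℓ ⬝ q(⟨g⟩) = 2 ⬝ n!`. -/
theorem directed_one_generator_count (n h ℓ : ℕ) (hn : 2 ≤ n) (hh : 1 ≤ h)
    (hℓ : 3 ≤ ℓ) (hend : h + ℓ - 1 ≤ n) :
    ℓ * Nat.card {σ : {v : ℕ // v ∈ Finset.Icc 1 n} ≃ Fin n //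
        ∀ m : {v : ℕ // v ∈ Finset.Icc 1 n},
          (m : ℕ) ∈ Finset.Icc h (h + ℓ - 1) →
          (∀ v : {v : ℕ // v ∈ Finset.Icc 1 n},
              (v : ℕ) ∈ Finset.Icc h (h + ℓ - 1) → σ v ≤ σ m) →
          ((m : ℕ) = h ∨ (m : ℕ) = h + ℓ - 1)} = 2 * Nat.factorial n :=
  directed_one_generator_count_general n h ℓ hh hℓ hend
end

section
/- Let T be a finite family of arcs and suppose x ∈ V lies in Int(g) for no g ∈ T. Then the linear order ⪯ on V = ZMod n defined by x + 1 ≺ x + 2 ≺ ⋯ ≺ x + n (so that x = x + n is the greatest element of V) is admissible for every arc of T; in particular q(T) ≥ 1. -/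
/-- The denouement of an arc `(h, ℓ)`: the vertex `h + (ℓ - 1)` in `ZMod n`. -/
def arcDen {n : ℕ} (g : ZMod n × ℕ) : ZMod n := g.1 + ((g.2 - 1 : ℕ) : ZMod n)

/-- The interior of an arc `(h, ℓ)`: the set `{h + j : 1 ≤ j ≤ ℓ - 2}` in `ZMod n`. -/
def arcInt {n : ℕ} (g : ZMod n × ℕ) : Finset (ZMod n) :=
  (Finset.Icc 1 (g.2 - 2)).image (fun j : ℕ => g.1 + (j : ZMod n))

/-- The hood of an arc `(h, ℓ)`: the set `{h + j : 0 ≤ j ≤ ℓ - 1}` in `ZMod n`. -/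
def arcHood {n : ℕ} (g : ZMod n × ℕ) : Finset (ZMod n) :=
  (Finset.range g.2).image (fun j : ℕ => g.1 + (j : ZMod n))

/-- A linear order on `ZMod n`, encoded by its ranking equivalence `σ : ZMod n ≃ Fin n`
(`v ≺ w` iff `σ v < σ w`), is admissible for the arc `g` if every interior vertex of `g`
lies strictly below the hook or strictly below the denouement of `g`. -/
def Admissible {n : ℕ} (σ : ZMod n ≃ Fin n) (g : ZMod n × ℕ) : Prop :=
  ∀ v ∈ arcInt g, σ v < σ g.1 ∨ σ v < σ (arcDen g)

/-- `qCount n T` is the number of linear orders on `ZMod n` (encoded by ranking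
equivalences `ZMod n ≃ Fin n`) admissible for every arc of `T`. -/
noncomputable def qCount (n : ℕ) (T : Finset (ZMod n × ℕ)) : ℕ :=
  Nat.card {σ : ZMod n ≃ Fin n // ∀ g ∈ T, Admissible σ g}

/-- `qCountAt n x T` is the number of linear orders on `ZMod n` admissible for every arc
of `T` and whose greatest element is `x`. -/
noncomputable def qCountAt (n : ℕ) (x : ZMod n) (T : Finset (ZMod n × ℕ)) : ℕ :=
  Nat.card {σ : ZMod n ≃ Fin n //
    (∀ g ∈ T, Admissible σ g) ∧ ∀ v : ZMod n, σ v ≤ σ x}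

/-- `delAt x T` is the subfamily of arcs of `T` for which `x` is neither the hook nor
the denouement. -/
def delAt {n : ℕ} (x : ZMod n) (T : Finset (ZMod n × ℕ)) : Finset (ZMod n × ℕ) :=
  T.filter fun g => g.1 ≠ x ∧ arcDen g ≠ x

/-- The arc `g'` is a subpath of the arc `g` if there is `j ≥ 0` with
`h' = h + j` in `ZMod n` and `j + ℓ' ≤ ℓ`. -/
def Subpath {n : ℕ} (g' g : ZMod n × ℕ) : Prop :=
  ∃ j : ℕ, g'.1 = g.1 + (j : ZMod n) ∧ j + g'.2 ≤ g.2

/-!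
Write `v = x + k + 1` with `0 ≤ k < n`; then `σ v = k`, so the order is "walk around the cycle
starting at `x + 1`", and `x` comes last. An arc with hook `x` is admissible since the hook is the
maximum. Otherwise the hook has rank `a < n - 1`, and the ranks `a + 1, …, a + ℓ - 2` of the
interior cannot reach `n - 1` (the rank of `x`, which is not an interior vertex); hence the whole
arc fits without wrapping around, its ranks increase along it, and the denouement is its maximum.
-/

variable {n : ℕ} {x : ZMod n} {σ : ZMod n ≃ Fin n}

theorem eq_add_rank_add_one (hσ : ∀ i : Fin n, σ (x + ((i : ℕ) : ZMod n) + 1) = i) (v : ZMod n) :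
    v = x + ((σ v : ℕ) : ZMod n) + 1 :=
  σ.injective (hσ (σ v)).symm

theorem rank_add_of_lt (hσ : ∀ i : Fin n, σ (x + ((i : ℕ) : ZMod n) + 1) = i) (v : ZMod n)
    {j : ℕ} (hj : (σ v : ℕ) + j < n) : (σ (v + (j : ZMod n)) : ℕ) = σ v + j := by
  have hv : v + (j : ZMod n) = x + (((σ v : ℕ) + j : ℕ) : ZMod n) + 1 := by
    push_cast
    linear_combination eq_add_rank_add_one hσ v
  rw [hv, hσ ⟨_, hj⟩]

theorem add_eq_of_rank_add_eq_pred (hσ : ∀ i : Fin n, σ (x + ((i : ℕ) : ZMod n) + 1) = i)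
    (v : ZMod n) {i : ℕ} (hi : (σ v : ℕ) + i = n - 1) : v + (i : ZMod n) = x := by
  have hn : n - 1 + 1 = n := Nat.sub_add_cancel (σ v).pos
  calc v + (i : ZMod n) = x + (((σ v : ℕ) + i + 1 : ℕ) : ZMod n) := by
        push_cast
        linear_combination eq_add_rank_add_one hσ v
    _ = x := by rw [hi, hn, ZMod.natCast_self, add_zero]

theorem admissible_of_notMem_arcInt (hσ : ∀ i : Fin n, σ (x + ((i : ℕ) : ZMod n) + 1) = i)
    {g : ZMod n × ℕ} (hx : x ∉ arcInt g) : Admissible σ g := by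
  intro v hv
  obtain ⟨j, hj, rfl⟩ := Finset.mem_image.mp hv
  rw [Finset.mem_Icc] at hj
  by_cases hhook : (σ g.1 : ℕ) = n - 1
  · left
    have hgx : g.1 = x := by
      simpa using add_eq_of_rank_add_eq_pred hσ g.1 (i := 0) (by simpa using hhook)
    have hne : (σ (g.1 + (j : ZMod n)) : ℕ) ≠ σ g.1 :=
      Fin.val_ne_of_ne fun h => hx (hgx ▸ σ.injective h ▸ hv)
    rw [Fin.lt_def]
    omega
  · right
    have hfit : (σ g.1 : ℕ) + (g.2 - 1) < n := by
      by_contra hwrap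
      exact hx (Finset.mem_image.mpr ⟨n - 1 - σ g.1, Finset.mem_Icc.mpr (by omega),
        add_eq_of_rank_add_eq_pred hσ g.1 (by omega)⟩)
    rw [Fin.lt_def, arcDen, rank_add_of_lt hσ _ (by omega), rank_add_of_lt hσ _ hfit]
    omega

theorem reverse_order_admissible_general (n : ℕ) (T : Finset (ZMod n × ℕ))
    (x : ZMod n) (hx : ∀ g ∈ T, x ∉ arcInt g)
    (σ : ZMod n ≃ Fin n) (hσ : ∀ i : Fin n, σ (x + ((i : ℕ) : ZMod n) + 1) = i) :
    (∀ g ∈ T, Admissible σ g) ∧ 1 ≤ qCount n T := by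
  have hadm : ∀ g ∈ T, Admissible σ g := fun g hg => admissible_of_notMem_arcInt hσ (hx g hg)
  have : Finite (ZMod n) := Finite.of_equiv _ σ.symm
  have : Nonempty {τ : ZMod n ≃ Fin n // ∀ g ∈ T, Admissible τ g} := ⟨⟨σ, hadm⟩⟩
  exact ⟨hadm, Nat.card_pos⟩

/-- if `x ∈ ZMod n` lies in the interior of no arc of `T`, then the linear
order `x + 1 ≺ x + 2 ≺ ⋯ ≺ x + n` (i.e. the ranking `σ` with `σ (x + i + 1) = i` for
all `i : Fin n`, so that `x` is the greatest element) is admissible for every arc of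
`T`; in particular `q(T) ≥ 1`. -/
theorem reverse_order_admissible (n : ℕ) (hn : 2 ≤ n) (T : Finset (ZMod n × ℕ))
    (hT : ∀ g ∈ T, 3 ≤ g.2) (x : ZMod n) (hx : ∀ g ∈ T, x ∉ arcInt g)
    (σ : ZMod n ≃ Fin n) (hσ : ∀ i : Fin n, σ (x + ((i : ℕ) : ZMod n) + 1) = i) :
    (∀ g ∈ T, Admissible σ g) ∧ 1 ≤ qCount n T :=
  reverse_order_admissible_general n T x hx σ hσ
end

section
/- For every finite family T of arcs, there exists a linear order on V admissible for every arc of T (i.e. q(T) > 0) if and only if X_T ≠ ∅, i.e. some vertex x ∈ V lies in Int(g) for no g ∈ T. (This is the combinatorial form of the paper's main criterion: a Nakayama algebra A is quasi-hereditary if and only if its Q-set 𝒳_A is nonempty.) -/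
/-- main criterion: for a finite family `T` of arcs, there is a linear
order on `ZMod n` admissible for every arc of `T` (i.e. `q(T) > 0`) if and only if some
vertex `x` lies in the interior of no arc of `T` (i.e. `X_T ≠ ∅`). -/
theorem quasi_hereditary_iff_Qset_nonempty (n : ℕ) (hn : 2 ≤ n)
    (T : Finset (ZMod n × ℕ)) (hT : ∀ g ∈ T, 3 ≤ g.2) :
    0 < qCount n T ↔ ∃ x : ZMod n, ∀ g ∈ T, x ∉ arcInt g := by
  haveI : NeZero n := ⟨by omega⟩
  rw [qCount, Nat.card_pos_iff]
  constructor
  · rintro ⟨⟨⟨σ, hσ⟩⟩, -⟩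
    refine ⟨σ.symm ⟨n-1, by omega⟩, fun g hg hxmem => ?_⟩
    have h1 := hσ g hg _ hxmem
    have h2 : σ (σ.symm ⟨n-1, by omega⟩) = ⟨n-1, by omega⟩ := σ.apply_symm_apply _
    rcases h1 with h | h <;> rw [h2, Fin.lt_def] at h
    · have h3 := (σ g.1).isLt; simp at h; omega
    · have h3 := (σ (arcDen g)).isLt; simp at h; omega
  · rintro ⟨x, hx⟩
    refine ⟨⟨⟨{ toFun := fun v => ⟨(v - (x+1)).val, ZMod.val_lt _⟩
                invFun := fun i => x + 1 + (i : ZMod n)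
                left_inv := fun v => by simp [ZMod.natCast_val]
                right_inv := fun i => by
                  ext
                  simp [ZMod.val_cast_of_lt i.isLt] },
            fun g hg v hv => ?_⟩⟩, inferInstance⟩
    have hL3 : 3 ≤ g.2 := hT g hg
    set L := g.2 with hLdef
    set t : ℕ := (x - g.1).val with htdef
    set t' : ℕ := if t = 0 then n else t with ht'def
    have ht_lt : t < n := ZMod.val_lt _
    have ht'le : t' ≤ n := by
      rcases eq_or_ne t 0 with h | h
      · simp [ht'def, h]
      · simp only [ht'def, if_neg h]; omega
    have ht'pos : 1 ≤ t' := by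
      rcases eq_or_ne t 0 with h | h
      · simp only [ht'def, if_pos h]; omega
      · simp only [ht'def, if_neg h]; omega
    have htc : ((t' : ℕ) : ZMod n) = x - g.1 := by
      rcases eq_or_ne t 0 with h | h
      · have hz : x - g.1 = 0 := by
          rwa [← ZMod.val_eq_zero]
        simp [ht'def, h, hz, ZMod.natCast_self]
      · simp only [ht'def, if_neg h]
        rw [htdef, ZMod.natCast_val, ZMod.cast_id]
    have hxe : g.1 + ((t' : ℕ) : ZMod n) = x := by rw [htc]; ring
    have hmem : ∀ j : ℕ, 1 ≤ j → j ≤ L - 2 → g.1 + (j : ZMod n) ∈ arcInt g :=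
      fun j h1 h2 => Finset.mem_image.mpr ⟨j, Finset.mem_Icc.mpr ⟨h1, h2⟩, rfl⟩
    have hLn : L - 2 < n := by
      by_contra h'
      exact hx g hg (hxe ▸ hmem t' ht'pos (by omega))
    have ht' : L - 1 ≤ t' := by
      rcases eq_or_ne t 0 with h | h
      · simp only [ht'def, if_pos h]; omega
      · by_contra h'
        have ht'eq : t' = t := by simp only [ht'def, if_neg h]
        exact hx g hg (hxe ▸ hmem t' ht'pos (by omega))
    have hval : ∀ j : ℕ, 1 ≤ j → j ≤ L - 1 →
        (g.1 + (j : ZMod n) - (x + 1)).val = j - 1 + (n - t') := by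
      intro j h1 h2
      have e : g.1 + (j : ZMod n) - (x + 1) = ((j - 1 + (n - t') : ℕ) : ZMod n) := by
        push_cast [Nat.cast_sub h1, Nat.cast_sub ht'le]
        rw [htc, ZMod.natCast_self]
        ring
      rw [e, ZMod.val_cast_of_lt (by omega : j - 1 + (n - t') < n)]
    obtain ⟨j, hj, rfl⟩ := Finset.mem_image.mp hv
    rw [Finset.mem_Icc] at hj
    right
    rw [Fin.lt_def]
    show (g.1 + (j : ZMod n) - (x + 1)).val < (arcDen g - (x + 1)).val
    have hd : arcDen g = g.1 + ((L - 1 : ℕ) : ZMod n) := rfl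
    rw [hd, hval j hj.1 (by omega), hval (L - 1) (by omega) (le_refl _)]
    omega
end

section
/- Let T be a finite family of arcs and let x ∈ V lie in Hod(g) for no g ∈ T. Then n · q_x(T) = q(T): among all linear orders on V admissible for every arc of T, exactly a 1/n proportion have x as greatest element. -/
/-- The permutation of `Fin (m+1)` sending the last element to `k` and preserving the
relative order of the remaining elements. -/
def insEquiv {m : ℕ} (k : Fin (m + 1)) : Fin (m + 1) ≃ Fin (m + 1) where
  toFun i := if h : (i : ℕ) = m then k
    else if (i : ℕ) < (k : ℕ) then i else ⟨(i : ℕ) + 1, by have := i.isLt; omega⟩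
  invFun j := if h : j = k then ⟨m, Nat.lt_succ_self m⟩
    else if (j : ℕ) < (k : ℕ) then j
    else ⟨(j : ℕ) - 1, by have := j.isLt; omega⟩
  left_inv i := by
    have hk := k.isLt
    have hi := i.isLt
    dsimp only
    split_ifs <;>
      simp only [Fin.ext_iff, Fin.lt_def, Fin.le_def, Fin.val_mk, not_true, not_lt,
        eq_self_iff_true] at *
    all_goals try omega
    all_goals exact absurd rfl (by assumption)
  right_inv j := by
    have hk := k.isLt
    have hj := j.isLt
    dsimp only
    split_ifs <;>
      simp only [Fin.ext_iff, Fin.lt_def, Fin.le_def, Fin.val_mk, not_true, not_lt,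
        eq_self_iff_true] at *
    all_goals try omega
    all_goals exact absurd rfl (by assumption)

lemma insEquiv_last {m : ℕ} (k : Fin (m + 1)) : insEquiv k (Fin.last m) = k := by
  simp [insEquiv]

lemma insEquiv_lt_iff {m : ℕ} (k : Fin (m + 1)) {i j : Fin (m + 1)}
    (hi : (i : ℕ) ≠ m) (hj : (j : ℕ) ≠ m) :
    insEquiv k i < insEquiv k j ↔ i < j := by
  have hk := k.isLt
  have hi' := i.isLt
  have hj' := j.isLt
  simp only [insEquiv, Equiv.coe_fn_mk, hi, hj, dite_false, dif_neg]
  rw [Fin.lt_def, Fin.lt_def]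
  by_cases h1 : (i : ℕ) < (k : ℕ) <;> by_cases h2 : (j : ℕ) < (k : ℕ) <;>
    simp [h1, h2] <;> omega

lemma insEquiv_symm_lt_iff {m : ℕ} (k : Fin (m + 1)) {a b : Fin (m + 1)}
    (ha : a ≠ k) (hb : b ≠ k) :
    (insEquiv k).symm a < (insEquiv k).symm b ↔ a < b := by
  set i := (insEquiv k).symm a with hia
  set j := (insEquiv k).symm b with hjb
  have hai : insEquiv k i = a := (insEquiv k).apply_symm_apply a
  have hbj : insEquiv k j = b := (insEquiv k).apply_symm_apply b
  have hi : (i : ℕ) ≠ m := by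
    intro h
    have : i = Fin.last m := Fin.ext h
    rw [this, insEquiv_last] at hai
    exact ha hai.symm
  have hj : (j : ℕ) ≠ m := by
    intro h
    have : j = Fin.last m := Fin.ext h
    rw [this, insEquiv_last] at hbj
    exact hb hbj.symm
  rw [← hai, ← hbj, insEquiv_lt_iff k hi hj]

lemma hook_mem_hood {n : ℕ} (g : ZMod n × ℕ) (hg : 3 ≤ g.2) : g.1 ∈ arcHood g := by
  simp only [arcHood, Finset.mem_image]
  exact ⟨0, by simp [Finset.mem_range]; omega, by simp⟩

lemma den_mem_hood {n : ℕ} (g : ZMod n × ℕ) (hg : 3 ≤ g.2) : arcDen g ∈ arcHood g := by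
  simp only [arcHood, Finset.mem_image]
  exact ⟨g.2 - 1, by simp [Finset.mem_range]; omega, rfl⟩

lemma int_subset_hood {n : ℕ} (g : ZMod n × ℕ) : arcInt g ⊆ arcHood g := by
  intro v hv
  simp only [arcInt, Finset.mem_image, Finset.mem_Icc] at hv
  obtain ⟨j, ⟨hj1, hj2⟩, rfl⟩ := hv
  simp only [arcHood, Finset.mem_image, Finset.mem_range]
  exact ⟨j, by omega, rfl⟩

/-- Transfer of admissibility under a rank permutation preserving comparisons away
from `σ x`, for an arc whose hood avoids `x`. -/
lemma admissible_trans_iff {n : ℕ} (σ : ZMod n ≃ Fin n) (p : Fin n ≃ Fin n)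
    (x : ZMod n) (g : ZMod n × ℕ) (hg : 3 ≤ g.2) (hxg : x ∉ arcHood g)
    (hp : ∀ a b : Fin n, a ≠ σ x → b ≠ σ x → (p a < p b ↔ a < b)) :
    Admissible (σ.trans p) g ↔ Admissible σ g := by
  have hhook : g.1 ≠ x := fun h => hxg (h ▸ hook_mem_hood g hg)
  have hden : arcDen g ≠ x := fun h => hxg (h ▸ den_mem_hood g hg)
  unfold Admissible
  refine forall₂_congr fun v hv => ?_
  have hvx : v ≠ x := fun h => hxg (h ▸ int_subset_hood g hv)
  simp only [Equiv.trans_apply]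
  rw [hp _ _ (fun h => hvx (σ.injective h)) (fun h => hhook (σ.injective h)),
    hp _ _ (fun h => hvx (σ.injective h)) (fun h => hden (σ.injective h))]

/-- if `x` lies in the hood of no arc of `T`, then exactly a `1/n`
proportion of the admissible linear orders have `x` as greatest element:
`n ⬝ q_x(T) = q(T)`. -/
theorem qCountAt_of_not_in_hood (n : ℕ) (hn : 2 ≤ n)
    (T : Finset (ZMod n × ℕ)) (hT : ∀ g ∈ T, 3 ≤ g.2) (x : ZMod n)
    (hx : ∀ g ∈ T, x ∉ arcHood g) :
    n * qCountAt n x T = qCount n T := by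
  obtain ⟨m, rfl⟩ : ∃ m, n = m + 1 := ⟨n - 1, by omega⟩
  -- the equivalence between admissible orders and pairs (position of x, x-max order)
  have E : {σ : ZMod (m+1) ≃ Fin (m+1) // ∀ g ∈ T, Admissible σ g} ≃
      Fin (m+1) × {σ : ZMod (m+1) ≃ Fin (m+1) //
        (∀ g ∈ T, Admissible σ g) ∧ ∀ v : ZMod (m+1), σ v ≤ σ x} := by
    refine
      { toFun := fun σ => ⟨σ.1 x, ⟨σ.1.trans (insEquiv (σ.1 x)).symm, ?_, ?_⟩⟩
        invFun := fun kτ => ⟨kτ.2.1.trans (insEquiv kτ.1), ?_⟩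
        left_inv := ?_
        right_inv := ?_ }
    · intro g hg
      rw [admissible_trans_iff σ.1 (insEquiv (σ.1 x)).symm x g (hT g hg) (hx g hg)]
      · exact σ.2 g hg
      · intro a b ha hb
        exact insEquiv_symm_lt_iff (σ.1 x) ha hb
    · intro v
      have hxl : (σ.1.trans (insEquiv (σ.1 x)).symm) x = Fin.last m := by
        simp only [Equiv.trans_apply]
        apply (insEquiv (σ.1 x)).injective
        rw [Equiv.apply_symm_apply, insEquiv_last]
      rw [hxl]
      exact Fin.le_last _
    · intro g hg
      obtain ⟨k, τ⟩ := kτ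
      have hτmax : τ.1 x = Fin.last m := by
        refine le_antisymm (Fin.le_last _) ?_
        have := τ.2.2 (τ.1.symm (Fin.last m))
        rwa [Equiv.apply_symm_apply] at this
      rw [admissible_trans_iff τ.1 (insEquiv k) x g (hT g hg) (hx g hg)]
      · exact τ.2.1 g hg
      · intro a b ha hb
        rw [hτmax] at ha hb
        exact insEquiv_lt_iff k (fun h => ha (Fin.ext h)) (fun h => hb (Fin.ext h))
    · intro σ
      apply Subtype.ext
      apply Equiv.ext
      intro v
      simp
    · rintro ⟨k, τ⟩
      have hτmax : τ.1 x = Fin.last m := by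
        refine le_antisymm (Fin.le_last _) ?_
        have := τ.2.2 (τ.1.symm (Fin.last m))
        rwa [Equiv.apply_symm_apply] at this
      have hfst : (τ.1.trans (insEquiv k)) x = k := by
        simp only [Equiv.trans_apply, hτmax, insEquiv_last]
      refine Prod.ext hfst ?_
      apply Subtype.ext
      apply Equiv.ext
      intro v
      simp [hfst]
  unfold qCount qCountAt
  rw [Nat.card_congr E, Nat.card_prod, Nat.card_eq_fintype_card (α := Fin (m+1)), Fintype.card_fin]
end

section
/- Let T be a finite family of arcs and let x ∈ V lie in Int(g) for no g ∈ T (i.e. x ∈ X_T). Then n · q_x(T) = q(T_x̂), where T_x̂ is the subfamily of T obtained by deleting all arcs having x as hook or denouement. -/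
section RhoAux

/-- The function sending `i` to the top `n-1`, shifting everything above `i` down by
one, and fixing everything below `i`. -/
def rhoFun (n : ℕ) (i : Fin n) (j : Fin n) : Fin n :=
  if j.val = i.val then ⟨n - 1, by have := i.isLt; omega⟩
  else if _h : i.val < j.val then ⟨j.val - 1, by have := j.isLt; omega⟩ else j

lemma rhoFun_val (n : ℕ) (i j : Fin n) :
    (rhoFun n i j).val = if j.val = i.val then n - 1
      else if i.val < j.val then j.val - 1 else j.val := by
  unfold rhoFun; split_ifs <;> rfl

/-- `rhoFun` as a permutation of `Fin n`. -/
noncomputable def rho (n : ℕ) (i : Fin n) : Fin n ≃ Fin n :=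
  Equiv.ofBijective (rhoFun n i) (by
    rw [Finite.injective_iff_bijective.symm]
    intro a b h
    have := i.isLt; have := a.isLt; have := b.isLt
    have h2 : (rhoFun n i a).val = (rhoFun n i b).val := by rw [h]
    rw [rhoFun_val, rhoFun_val] at h2
    apply Fin.ext
    split_ifs at h2 <;> omega)

lemma rho_val (n : ℕ) (i j : Fin n) :
    (rho n i j).val = if j.val = i.val then n - 1
      else if i.val < j.val then j.val - 1 else j.val := rhoFun_val n i j

lemma rho_self (n : ℕ) (i : Fin n) : (rho n i i).val = n - 1 := by
  simp [rho_val]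

lemma rho_lt_iff (n : ℕ) (i a b : Fin n) (ha : a ≠ i) (hb : b ≠ i) :
    rho n i a < rho n i b ↔ a < b := by
  have hi := i.isLt; have ha' := a.isLt; have hb' := b.isLt
  have ha2 : a.val ≠ i.val := fun h => ha (Fin.ext h)
  have hb2 : b.val ≠ i.val := fun h => hb (Fin.ext h)
  rw [Fin.lt_def, Fin.lt_def, rho_val, rho_val]
  split_ifs <;> omega

lemma rho_symm_top (n : ℕ) (i : Fin n) (k : Fin n) (hk : k.val = n - 1) :
    (rho n i).symm k = i := by
  rw [Equiv.symm_apply_eq]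
  apply Fin.ext
  rw [rho_self, hk]

lemma rho_symm_lt_iff (n : ℕ) (i a b : Fin n) (ha : a.val ≠ n - 1) (hb : b.val ≠ n - 1) :
    (rho n i).symm a < (rho n i).symm b ↔ a < b := by
  have ha2 : (rho n i).symm a ≠ i := by
    intro h
    have h3 : rho n i ((rho n i).symm a) = a := Equiv.apply_symm_apply _ _
    rw [h] at h3
    exact ha (by rw [← h3, rho_self])
  have hb2 : (rho n i).symm b ≠ i := by
    intro h
    have h3 : rho n i ((rho n i).symm b) = b := Equiv.apply_symm_apply _ _
    rw [h] at h3
    exact hb (by rw [← h3, rho_self])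
  rw [← rho_lt_iff n i _ _ ha2 hb2, Equiv.apply_symm_apply, Equiv.apply_symm_apply]

end RhoAux

/-- if `x` lies in the interior of no arc of `T` (i.e. `x ∈ X_T`), then
`n ⬝ q_x(T) = q(T_x̂)`, where `T_x̂` is `T` with all arcs having `x` as hook or
denouement deleted. -/
theorem n_mul_qCountAt_eq_qCount_delAt (n : ℕ) (hn : 2 ≤ n)
    (T : Finset (ZMod n × ℕ)) (hT : ∀ g ∈ T, 3 ≤ g.2) (x : ZMod n)
    (hx : ∀ g ∈ T, x ∉ arcInt g) :
    n * qCountAt n x T = qCount n (delAt x T) := by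
  classical
  -- For any top-at-x order, the rank of x is n-1.
  have htopval : ∀ (τ : ZMod n ≃ Fin n), (∀ v : ZMod n, τ v ≤ τ x) → (τ x).val = n - 1 := by
    intro τ h
    have h1 := h (τ.symm ⟨n - 1, by omega⟩)
    rw [Equiv.apply_symm_apply, Fin.le_def] at h1
    have h2 := (τ x).isLt
    simp only at h1
    omega
  have hnontop : ∀ (τ : ZMod n ≃ Fin n), (∀ v : ZMod n, τ v ≤ τ x) →
      ∀ w : ZMod n, w ≠ x → (τ w).val ≠ n - 1 := by
    intro τ h w hw heq
    exact hw (τ.injective (Fin.ext (by rw [heq, htopval τ h])))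
  have E : {σ : ZMod n ≃ Fin n // ∀ g ∈ delAt x T, Admissible σ g} ≃
      (Fin n) × {σ : ZMod n ≃ Fin n //
        (∀ g ∈ T, Admissible σ g) ∧ ∀ v : ZMod n, σ v ≤ σ x} := by
    refine ⟨fun σp => (σp.1 x, ⟨σp.1.trans (rho n (σp.1 x)), ?_, ?_⟩),
      fun p => ⟨p.2.1.trans (rho n p.1).symm, ?_⟩, ?_, ?_⟩
    · -- forward: admissible for all of T
      obtain ⟨σ, hσ⟩ := σp
      intro g hg v hv
      have hvx : v ≠ x := fun h => hx g hg (h ▸ hv)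
      have hx1 : ((σ.trans (rho n (σ x))) x).val = n - 1 := by
        simp only [Equiv.trans_apply]; exact rho_self n (σ x)
      have hlt_top : (σ.trans (rho n (σ x))) v < (σ.trans (rho n (σ x))) x := by
        have hne : ((σ.trans (rho n (σ x))) v).val ≠ n - 1 := by
          intro h
          exact hvx ((σ.trans (rho n (σ x))).injective (Fin.ext (by rw [h, hx1])))
        have h3 := ((σ.trans (rho n (σ x))) v).isLt
        rw [Fin.lt_def, hx1]
        omega
      by_cases h1 : g.1 = x
      · left; rw [h1]; exact hlt_top
      by_cases h2 : arcDen g = x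
      · right; rw [h2]; exact hlt_top
      · have hadm := hσ g (Finset.mem_filter.mpr ⟨hg, h1, h2⟩)
        rcases hadm v hv with h | h
        · left
          have := (rho_lt_iff n (σ x) (σ v) (σ g.1)
            (fun he => hvx (σ.injective he)) (fun he => h1 (σ.injective he))).mpr h
          simpa only [Equiv.trans_apply] using this
        · right
          have := (rho_lt_iff n (σ x) (σ v) (σ (arcDen g))
            (fun he => hvx (σ.injective he)) (fun he => h2 (σ.injective he))).mpr h
          simpa only [Equiv.trans_apply] using this
    · -- forward: x is on top
      obtain ⟨σ, hσ⟩ := σp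
      intro v
      have hx1 : ((σ.trans (rho n (σ x))) x).val = n - 1 := by
        simp only [Equiv.trans_apply]; exact rho_self n (σ x)
      have h3 := ((σ.trans (rho n (σ x))) v).isLt
      rw [Fin.le_def, hx1]
      omega
    · -- backward: admissible for delAt
      obtain ⟨i, τ, hτ⟩ := p
      intro g hg v hv
      rw [delAt, Finset.mem_filter] at hg
      obtain ⟨hgT, h1, h2⟩ := hg
      have hvx : v ≠ x := fun h => hx g hgT (h ▸ hv)
      rcases hτ.1 g hgT v hv with h | h
      · left
        have := (rho_symm_lt_iff n i (τ v) (τ g.1)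
          (hnontop τ hτ.2 v hvx) (hnontop τ hτ.2 g.1 h1)).mpr h
        simpa only [Equiv.trans_apply] using this
      · right
        have := (rho_symm_lt_iff n i (τ v) (τ (arcDen g))
          (hnontop τ hτ.2 v hvx) (hnontop τ hτ.2 (arcDen g) h2)).mpr h
        simpa only [Equiv.trans_apply] using this
    · -- left inverse
      intro σp
      apply Subtype.ext
      ext v
      simp only [Equiv.trans_apply, Equiv.symm_apply_apply]
    · -- right inverse
      intro p
      obtain ⟨i, τ, hτ⟩ := p
      have htop := htopval τ hτ.2
      have h1 : (τ.trans (rho n i).symm) x = i := by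
        simp only [Equiv.trans_apply]; exact rho_symm_top n i (τ x) htop
      simp only [Prod.mk.injEq]
      refine ⟨h1, ?_⟩
      apply Subtype.ext
      show (τ.trans (rho n i).symm).trans (rho n ((τ.trans (rho n i).symm) x)) = τ
      rw [h1]
      ext v
      simp only [Equiv.trans_apply, Equiv.apply_symm_apply]
  unfold qCount qCountAt
  rw [Nat.card_congr E, Nat.card_prod]
  congr 1
  simp
end

section
/- For every finite family T of arcs, n · q(T) = Σ_{x ∈ X_T} q(T_x̂), where the sum runs over all vertices x ∈ V that lie in no interior Int(g), g ∈ T, and T_x̂ is T with all arcs having x as hook or denouement deleted (so T_x̂ = T when x lies in no hood at all). This is the paper's iteration formula q(A) = (1/n)[ Σ_{x ∈ 𝒳⁰} q(A) + Σ_{x ∈ 𝒳¹} q(KQ_n/I_x̂) + Σ_{x ∈ 𝒳²} q(KQ_n/I_x̂) ] for the number of quasi-hereditary orderings of a Nakayama algebra. -/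
theorem Nat.card_subtype_eq_sum_card_fiber {α β : Type*} [Finite α] [Fintype β]
    (p : α → Prop) (f : α → β) :
    Nat.card {a // p a} = ∑ b, Nat.card {a // p a ∧ f a = b} := by
  rw [← Nat.card_sigma]
  exact Nat.card_congr <| (Equiv.sigmaFiberEquiv (f ∘ Subtype.val)).symm.trans
    (Equiv.sigmaCongrRight fun b => Equiv.subtypeSubtypeEquivSubtypeInter p (f · = b))

namespace Fin

variable {m : ℕ}

/-- Moves `k` to the top and slides everything above `k` down by one. -/
def toTop (k : Fin (m + 1)) : Equiv.Perm (Fin (m + 1)) := (cycleIcc k (last m)).symm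

theorem toTop_self (k : Fin (m + 1)) : toTop k k = last m :=
  (Equiv.symm_apply_eq _).2 (cycleIcc_of_last (le_last k)).symm

theorem toTop_succAbove (k : Fin (m + 1)) (a : Fin m) :
    toTop k (k.succAbove a) = a.castSucc := by
  rw [toTop, Equiv.symm_apply_eq, ← succAbove_last_apply]
  exact (congrFun (cycleIcc_comp_succAbove k (last m) (le_last k)) a).symm

theorem toTop_lt_toTop_iff {k i j : Fin (m + 1)} (hi : i ≠ k) (hj : j ≠ k) :
    toTop k i < toTop k j ↔ i < j := by
  obtain ⟨a, rfl⟩ := exists_succAbove_eq hi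
  obtain ⟨b, rfl⟩ := exists_succAbove_eq hj
  rw [toTop_succAbove, toTop_succAbove, castSucc_lt_castSucc_iff, succAbove_lt_succAbove_iff]

theorem forall_le_iff_eq_last {V : Type*} (σ : V ≃ Fin (m + 1)) (x : V) :
    (∀ v, σ v ≤ σ x) ↔ σ x = last m := by
  refine ⟨fun htop => (le_last _).antisymm ?_, fun hx v => hx ▸ le_last _⟩
  simpa using htop (σ.symm (last m))

end Fin

theorem Nat.card_ranking_eq_mul_card_last {V : Type*} [Finite V] {m : ℕ} (x : V)
    (P : (V ≃ Fin (m + 1)) → Prop)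
    (hP : ∀ σ τ : V ≃ Fin (m + 1),
      (∀ u v, u ≠ x → v ≠ x → (σ u < σ v ↔ τ u < τ v)) → (P σ ↔ P τ)) :
    Nat.card {σ // P σ} = (m + 1) * Nat.card {σ // P σ ∧ σ x = Fin.last m} := by
  have fiber (k : Fin (m + 1)) :
      Nat.card {σ // P σ ∧ σ x = k} = Nat.card {σ // P σ ∧ σ x = Fin.last m} := by
    refine Nat.card_congr <| Equiv.subtypeEquiv ((Equiv.refl V).equivCongr (Fin.toTop k))
      fun σ => ?_
    simp only [Equiv.equivCongr_apply_apply, Equiv.refl_symm, Equiv.refl_apply]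
    rw [← Fin.toTop_self k, EmbeddingLike.apply_eq_iff_eq, and_congr_left_iff]
    rintro rfl
    refine hP _ _ fun u v hu hv => (Fin.toTop_lt_toTop_iff ?_ ?_).symm
    · exact σ.injective.ne hu
    · exact σ.injective.ne hv
  rw [Nat.card_subtype_eq_sum_card_fiber P (· x)]
  simp [fiber]

section Arcs

variable {n : ℕ} {σ τ : ZMod n ≃ Fin n} {g : ZMod n × ℕ} {x : ZMod n}

theorem not_admissible_of_top_mem_arcInt (hx : x ∈ arcInt g) (htop : ∀ v, σ v ≤ σ x) :
    ¬ Admissible σ g := by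
  intro hadm
  rcases hadm x hx with h | h <;> exact (htop _).not_gt h

theorem admissible_of_top_eq_end (hx : x ∉ arcInt g) (hend : g.1 = x ∨ arcDen g = x)
    (htop : ∀ v, σ v ≤ σ x) : Admissible σ g := by
  intro v hv
  have hlt : σ v < σ x := (htop v).lt_of_ne (σ.injective.ne (ne_of_mem_of_not_mem hv hx))
  rcases hend with h | h
  · exact .inl (h ▸ hlt)
  · exact .inr (h ▸ hlt)

theorem admissible_congr_of_lt_iff_lt
    (hστ : ∀ u v, u ≠ x → v ≠ x → (σ u < σ v ↔ τ u < τ v))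
    (hhook : g.1 ≠ x) (hden : arcDen g ≠ x) (hint : x ∉ arcInt g) :
    Admissible σ g ↔ Admissible τ g := by
  refine forall₂_congr fun v hv => ?_
  have hvx : v ≠ x := ne_of_mem_of_not_mem hv hint
  rw [hστ v _ hvx hhook, hστ v _ hvx hden]

theorem qCountAt_eq_zero_of_mem_arcInt {T : Finset (ZMod n × ℕ)} (hg : g ∈ T)
    (hx : x ∈ arcInt g) : qCountAt n x T = 0 :=
  have : IsEmpty {σ : ZMod n ≃ Fin n // (∀ g ∈ T, Admissible σ g) ∧ ∀ v, σ v ≤ σ x} :=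
    ⟨fun ⟨_, hadm, htop⟩ => not_admissible_of_top_mem_arcInt hx htop (hadm g hg)⟩
  Nat.card_of_isEmpty

theorem qCountAt_delAt {T : Finset (ZMod n × ℕ)} (hx : ∀ g ∈ T, x ∉ arcInt g) :
    qCountAt n x (delAt x T) = qCountAt n x T := by
  refine Nat.card_congr <| Equiv.subtypeEquivRight fun σ => and_congr_left fun htop => ?_
  refine ⟨fun hadm g hg => ?_, fun hadm g hg => hadm g (Finset.mem_filter.1 hg).1⟩
  by_cases hend : g.1 = x ∨ arcDen g = x
  · exact admissible_of_top_eq_end (hx g hg) hend htop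
  · exact hadm g (Finset.mem_filter.2 ⟨hg, not_or.1 hend⟩)

end Arcs

section Counting

variable {m : ℕ}

theorem qCountAt_eq_card_last (x : ZMod (m + 1)) (T : Finset (ZMod (m + 1) × ℕ)) :
    qCountAt (m + 1) x T =
      Nat.card {σ : ZMod (m + 1) ≃ Fin (m + 1) //
        (∀ g ∈ T, Admissible σ g) ∧ σ x = Fin.last m} := by
  simp_rw [qCountAt, Fin.forall_le_iff_eq_last]

theorem qCount_eq_sum_qCountAt (T : Finset (ZMod (m + 1) × ℕ)) :
    qCount (m + 1) T = ∑ x, qCountAt (m + 1) x T := by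
  rw [qCount, Nat.card_subtype_eq_sum_card_fiber _ fun σ => σ.symm (Fin.last m)]
  simp_rw [qCountAt_eq_card_last, Equiv.symm_apply_eq, eq_comm]

theorem qCount_delAt_eq_mul {x : ZMod (m + 1)} {T : Finset (ZMod (m + 1) × ℕ)}
    (hx : ∀ g ∈ T, x ∉ arcInt g) :
    qCount (m + 1) (delAt x T) = (m + 1) * qCountAt (m + 1) x (delAt x T) := by
  rw [qCount, qCountAt_eq_card_last]
  refine Nat.card_ranking_eq_mul_card_last x _ fun σ τ hστ => forall₂_congr fun g hg => ?_
  obtain ⟨hgT, hhook, hden⟩ := Finset.mem_filter.1 hg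
  exact admissible_congr_of_lt_iff_lt hστ hhook hden (hx g hgT)

end Counting

theorem iteration_formula_general (n : ℕ) [NeZero n]
    (T : Finset (ZMod n × ℕ)) :
    n * qCount n T =
      ∑ x ∈ Finset.univ.filter (fun x : ZMod n => ∀ g ∈ T, x ∉ arcInt g),
        qCount n (delAt x T) := by
  obtain ⟨m, rfl⟩ : ∃ m, n = m + 1 := Nat.exists_eq_succ_of_ne_zero (NeZero.ne n)
  rw [qCount_eq_sum_qCountAt, Finset.mul_sum, Finset.sum_filter]
  refine Finset.sum_congr rfl fun x _ => ?_
  split_ifs with hx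
  · rw [qCount_delAt_eq_mul hx, qCountAt_delAt hx]
  · obtain ⟨g, hg, hxg⟩ := not_forall₂.1 hx
    rw [qCountAt_eq_zero_of_mem_arcInt hg (not_not.1 hxg), mul_zero]

/-- iteration formula: for every finite family `T` of arcs,
`n ⬝ q(T) = Σ_{x ∈ X_T} q(T_x̂)`, the sum over all vertices `x ∈ ZMod n` lying in no
interior `Int(g)`, `g ∈ T`, where `T_x̂` is `T` with all arcs having `x` as hook or
denouement deleted. -/
theorem iteration_formula (n : ℕ) [NeZero n] (hn : 2 ≤ n)
    (T : Finset (ZMod n × ℕ)) (hT : ∀ g ∈ T, 3 ≤ g.2) :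
    n * qCount n T =
      ∑ x ∈ Finset.univ.filter (fun x : ZMod n => ∀ g ∈ T, x ∉ arcInt g),
        qCount n (delAt x T) :=
  iteration_formula_general n T
end

section
/- Let n ≥ 2 and let T be a nonempty finite family of arcs (each of length ≥ 3). Then 3 · q(T) ≤ 2 · n!; that is, the number of linear orders on ZMod n admissible for every arc of T is at most (2/3) · n!. (This establishes the q-ordering conjecture q(A) ≤ (2/3) n! for all non-hereditary Nakayama algebras A.) -/
/-!
Take an arc `g = (h, ℓ)` of `T`. Its interior contains `v = h + 1`, so an admissible order never
has `v` as its maximum on `{v, h, d(g)}`. Composing with the transposition of two elements of a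
finite set `s` sends the orders whose maximum on `s` is one of them injectively to those whose
maximum is the other; as every order has a maximum on `s`, each element of `s` is the maximum in
at least `n! / #s` orders. With `#s ≤ 3` this leaves at most `2/3 · n!` admissible orders.
-/

open Finset

section MaxOfFinset

variable {α β : Type*} [Fintype α] [DecidableEq α] [Fintype β] [LinearOrder β]

lemma card_filter_forall_le_le (s : Finset α) {x y : α} (hx : x ∈ s) (hy : y ∈ s) :
    #{σ : α ≃ β | ∀ z ∈ s, σ z ≤ σ x} ≤ #{σ : α ≃ β | ∀ z ∈ s, σ z ≤ σ y} := by
  refine card_le_card_of_injOn (fun σ => (Equiv.swap x y).trans σ) (fun σ hσ => ?_) ?_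
  · simp only [coe_filter, mem_univ, true_and, Set.mem_ofPred_eq] at hσ ⊢
    intro z hz
    have hsz : Equiv.swap x y z ∈ s := by
      rw [Equiv.swap_apply_def]; split_ifs <;> assumption
    simpa using hσ _ hsz
  · intro σ _ τ _ hστ
    ext a
    simpa using DFunLike.congr_fun hστ (Equiv.swap x y a)

lemma card_le_card_mul_card_filter_forall_le (s : Finset α) {v : α} (hv : v ∈ s) :
    Fintype.card (α ≃ β) ≤ #s * #{σ : α ≃ β | ∀ z ∈ s, σ z ≤ σ v} := by
  have hcover : (univ : Finset (α ≃ β)) ⊆ s.biUnion fun x => {σ | ∀ z ∈ s, σ z ≤ σ x} := by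
    intro σ _
    obtain ⟨x, hx, hmax⟩ := s.exists_max_image σ ⟨v, hv⟩
    exact mem_biUnion.2 ⟨x, hx, mem_filter.2 ⟨mem_univ _, hmax⟩⟩
  calc Fintype.card (α ≃ β) = #(univ : Finset (α ≃ β)) := card_univ.symm
    _ ≤ ∑ x ∈ s, #{σ : α ≃ β | ∀ z ∈ s, σ z ≤ σ x} := (card_le_card hcover).trans card_biUnion_le
    _ ≤ #s * #{σ : α ≃ β | ∀ z ∈ s, σ z ≤ σ v} :=
      sum_le_card_nsmul _ _ _ fun x hx => card_filter_forall_le_le s hx hv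

lemma three_mul_card_filter_lt_or_lt_le (v a b : α) :
    3 * #{σ : α ≃ β | σ v < σ a ∨ σ v < σ b} ≤ 2 * Fintype.card (α ≃ β) := by
  have hsplit := card_filter_add_card_filter_not (s := (univ : Finset (α ≃ β)))
    (fun σ => σ v < σ a ∨ σ v < σ b)
  have hmax : #{σ : α ≃ β | ¬(σ v < σ a ∨ σ v < σ b)} =
      #{σ : α ≃ β | ∀ z ∈ ({v, a, b} : Finset α), σ z ≤ σ v} := by
    simp [not_lt]
  have hbound := card_le_card_mul_card_filter_forall_le (β := β) {v, a, b} (mem_insert_self v _)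
  have h3 : Fintype.card (α ≃ β) ≤ 3 * #{σ : α ≃ β | ¬(σ v < σ a ∨ σ v < σ b)} :=
    hmax ▸ hbound.trans (Nat.mul_le_mul_right _ card_le_three)
  rw [card_univ] at hsplit
  omega

end MaxOfFinset

section Arcs

variable {n : ℕ}

lemma add_one_mem_arcInt {g : ZMod n × ℕ} (hg : 3 ≤ g.2) : g.1 + 1 ∈ arcInt g :=
  mem_image.2 ⟨1, mem_Icc.2 ⟨le_rfl, by omega⟩, by simp⟩

lemma qCount_zero (T : Finset (ZMod 0 × ℕ)) : qCount 0 T = 0 :=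
  Nat.card_eq_zero.2 (Or.inl ⟨fun σ => (σ.1 0).elim0⟩)

variable [NeZero n]

instance (σ : ZMod n ≃ Fin n) (g : ZMod n × ℕ) : Decidable (Admissible σ g) :=
  inferInstanceAs (Decidable (∀ v ∈ arcInt g, _))

lemma qCount_le_card_filter_admissible {T : Finset (ZMod n × ℕ)} {g : ZMod n × ℕ} (hg : g ∈ T) :
    qCount n T ≤ #{σ : ZMod n ≃ Fin n | Admissible σ g} := by
  rw [qCount, Nat.card_eq_fintype_card, Fintype.card_subtype]
  exact card_le_card (monotone_filter_right _ fun σ _ hσ => hσ g hg)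

lemma three_mul_card_filter_admissible_le {g : ZMod n × ℕ} (hg : 3 ≤ g.2) :
    3 * #{σ : ZMod n ≃ Fin n | Admissible σ g} ≤ 2 * n.factorial := by
  calc 3 * #{σ : ZMod n ≃ Fin n | Admissible σ g}
      ≤ 3 * #{σ : ZMod n ≃ Fin n | σ (g.1 + 1) < σ g.1 ∨ σ (g.1 + 1) < σ (arcDen g)} :=
        Nat.mul_le_mul_left 3 <| card_le_card <|
          monotone_filter_right _ fun σ _ hσ => hσ _ (add_one_mem_arcInt hg)
    _ ≤ 2 * Fintype.card (ZMod n ≃ Fin n) := three_mul_card_filter_lt_or_lt_le _ _ _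
    _ = 2 * n.factorial := by rw [Fintype.card_equiv (ZMod.finEquiv n).symm, ZMod.card]

end Arcs

theorem q_conjecture_Nakayama_general (n : ℕ)
    (T : Finset (ZMod n × ℕ)) (hT : ∀ g ∈ T, 3 ≤ g.2) (hne : T.Nonempty) :
    3 * qCount n T ≤ 2 * Nat.factorial n := by
  obtain ⟨g, hg⟩ := hne
  rcases eq_zero_or_neZero n with rfl | _
  · simp [qCount_zero]
  · calc 3 * qCount n T ≤ 3 * #{σ : ZMod n ≃ Fin n | Admissible σ g} :=
          Nat.mul_le_mul_left 3 (qCount_le_card_filter_admissible hg)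
      _ ≤ 2 * n.factorial := three_mul_card_filter_admissible_le (hT g hg)

/-- q-ordering conjecture for Nakayama algebras: for every nonempty
finite family `T` of arcs, each of length `≥ 3`, we have `3 ⬝ q(T) ≤ 2 ⬝ n!`, i.e.
`q(T) ≤ (2/3) ⬝ n!`. -/
theorem q_conjecture_Nakayama (n : ℕ) (hn : 2 ≤ n)
    (T : Finset (ZMod n × ℕ)) (hT : ∀ g ∈ T, 3 ≤ g.2) (hne : T.Nonempty) :
    3 * qCount n T ≤ 2 * Nat.factorial n :=
  q_conjecture_Nakayama_general n T hT hne
end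

section
/- Let n ≥ 3 and let T be a nonempty finite family of arcs (each of length ≥ 3) that is minimal, meaning that no arc of T is a subpath of a different arc of T. Then 3 · q(T) = 2 · n! holds if and only if T consists of exactly one arc, and that arc has length 3. (This is the equality case of the paper's bound q(A) ≤ (2/3) n!: equality holds exactly when the relation ideal is principal, generated by a single path of length 3.) -/
section ArgmaxCount

variable {α β : Type*} [LinearOrder β]

theorem IsMaxOn.eq_of_injective {f : α → β} (hf : f.Injective) {S : Set α} {a b : α}
    (ha : a ∈ S) (hb : b ∈ S) (hfa : IsMaxOn f S a) (hfb : IsMaxOn f S b) : a = b :=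
  hf (le_antisymm (hfb ha) (hfa hb))

variable [DecidableEq α]

theorem card_isMaxOn_eq (S : Set α) {a b : α} (ha : a ∈ S) (hb : b ∈ S) :
    Nat.card {σ : α ≃ β // IsMaxOn σ S a} = Nat.card {σ : α ≃ β // IsMaxOn σ S b} := by
  have hS : Set.MapsTo (Equiv.swap a b) S S := fun v hv => by
    rw [Equiv.swap_apply_def]; split_ifs <;> assumption
  refine Nat.card_congr ((Equiv.swap a b).equivCongr (Equiv.refl β) |>.subtypeEquiv ?_)
  intro σ
  constructor
  · intro h
    exact h.comp_mapsTo hS (Equiv.swap_apply_right a b)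
  · intro h
    simpa [Function.comp_def] using h.comp_mapsTo hS (Equiv.swap_apply_left a b)

variable [Fintype α] [Fintype β]

theorem card_exists_isMaxOn {S A : Finset α} (hA : A ⊆ S) :
    Nat.card {σ : α ≃ β // ∃ a ∈ A, IsMaxOn σ S a} =
      ∑ a ∈ A, Nat.card {σ : α ≃ β // IsMaxOn σ S a} := by
  classical
  simp only [Nat.card_eq_fintype_card, Fintype.card_subtype]
  rw [← Finset.card_biUnion]
  · congr 1
    ext σ
    simp
  · intro a ha b hb hab
    simp only [Function.onFun, Finset.disjoint_left, Finset.mem_filter, Finset.mem_univ,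
      true_and]
    exact fun σ hσa hσb => hab (hσa.eq_of_injective σ.injective (hA ha) (hA hb) hσb)

theorem card_mul_card_isMaxOn {S : Finset α} {a : α} (ha : a ∈ S) :
    S.card * Nat.card {σ : α ≃ β // IsMaxOn σ S a} = Nat.card (α ≃ β) := by
  have hmax : ∀ σ : α ≃ β, ∃ b ∈ S, IsMaxOn σ S b := fun σ =>
    (S.exists_max_image σ ⟨a, ha⟩).imp fun b hb => ⟨hb.1, isMaxOn_iff.2 hb.2⟩
  calc S.card * Nat.card {σ : α ≃ β // IsMaxOn σ S a}
      = ∑ b ∈ S, Nat.card {σ : α ≃ β // IsMaxOn σ S b} := by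
        rw [Finset.sum_congr rfl fun b hb => card_isMaxOn_eq (S : Set α) hb ha,
          Finset.sum_const, smul_eq_mul]
    _ = Nat.card {σ : α ≃ β // ∃ b ∈ S, IsMaxOn σ S b} := (card_exists_isMaxOn subset_rfl).symm
    _ = Nat.card (α ≃ β) := Nat.card_congr (Equiv.subtypeUnivEquiv hmax)

theorem card_mul_card_exists_isMaxOn {S A : Finset α} (hA : A ⊆ S) :
    S.card * Nat.card {σ : α ≃ β // ∃ a ∈ A, IsMaxOn σ S a} = A.card * Nat.card (α ≃ β) := by
  rw [card_exists_isMaxOn hA, Finset.mul_sum,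
    Finset.sum_congr rfl fun a ha => card_mul_card_isMaxOn (hA ha), Finset.sum_const,
    smul_eq_mul]

end ArgmaxCount

theorem Equiv.exists_apply_eq_bot_apply_eq_top {α β : Type*} [DecidableEq β] [PartialOrder β]
    [BoundedOrder β] (e : α ≃ β) {a b : α} (hab : a ≠ b) :
    ∃ σ : α ≃ β, σ a = ⊥ ∧ σ b = ⊤ := by
  set σ₁ := e.trans (Equiv.swap (e a) ⊥)
  have hσ₁ : σ₁ a = ⊥ := by simp [σ₁]
  have hb : σ₁ b ≠ ⊥ := hσ₁ ▸ σ₁.injective.ne hab.symm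
  have hbot : (⊥ : β) ≠ ⊤ := fun h => hb (le_bot_iff.1 (h ▸ le_top))
  refine ⟨σ₁.trans (Equiv.swap (σ₁ b) ⊤), ?_, by simp⟩
  simp [hσ₁, Equiv.swap_apply_of_ne_of_ne hb.symm hbot]

section Arcs

variable {n : ℕ}

theorem add_natCast_inj {h : ZMod n} {i j : ℕ} (hi : i < n) (hj : j < n) :
    h + i = h + j ↔ i = j := by
  rw [add_right_inj, ZMod.natCast_eq_natCast_iff', Nat.mod_eq_of_lt hi, Nat.mod_eq_of_lt hj]

theorem add_natCast_ne_self {h : ZMod n} {i : ℕ} (hi0 : 0 < i) (hi : i < n) : h + i ≠ h := by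
  simpa using (add_natCast_inj (h := h) hi (hi0.trans hi)).not.2 hi0.ne'

theorem mem_arcInt {g : ZMod n × ℕ} {j : ℕ} (h1 : 1 ≤ j) (h2 : j + 2 ≤ g.2) :
    g.1 + (j : ZMod n) ∈ arcInt g :=
  Finset.mem_image_of_mem _ (Finset.mem_Icc.2 ⟨h1, by omega⟩)

theorem arcInt_subset_arcHood (g : ZMod n × ℕ) : arcInt g ⊆ arcHood g :=
  Finset.image_subset_image fun j hj => by
    simp only [Finset.mem_Icc, Finset.mem_range] at hj ⊢; omega

theorem arcHood_subset (g : ZMod n × ℕ) :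
    arcHood g ⊆ insert g.1 (insert (arcDen g) (arcInt g)) := by
  intro v hv
  obtain ⟨j, hj, rfl⟩ := Finset.mem_image.1 hv
  rw [Finset.mem_range] at hj
  rcases Nat.eq_zero_or_pos j with rfl | hj0
  · simp
  rcases eq_or_ne j (g.2 - 1) with rfl | hjd
  · simp [arcDen]
  · exact Finset.mem_insert_of_mem (Finset.mem_insert_of_mem (mem_arcInt hj0 (by omega)))

theorem hook_mem_arcHood {g : ZMod n × ℕ} (hg : 0 < g.2) : g.1 ∈ arcHood g :=
  Finset.mem_image.2 ⟨0, Finset.mem_range.2 hg, by simp⟩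

theorem arcDen_mem_arcHood {g : ZMod n × ℕ} (hg : 0 < g.2) : arcDen g ∈ arcHood g :=
  Finset.mem_image_of_mem _ (Finset.mem_range.2 (by omega))

theorem card_arcHood {g : ZMod n × ℕ} (hg : g.2 ≤ n) : (arcHood g).card = g.2 := by
  rw [arcHood, Finset.card_image_of_injOn, Finset.card_range]
  intro i hi j hj hij
  simp only [Finset.coe_range, Set.mem_Iio] at hi hj
  exact (add_natCast_inj (by omega) (by omega)).1 hij

theorem hook_ne_arcDen {g : ZMod n × ℕ} (h2 : 2 ≤ g.2) (hg : g.2 ≤ n) : g.1 ≠ arcDen g :=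
  (add_natCast_ne_self (by omega) (by omega)).symm

theorem hook_notMem_arcInt {g : ZMod n × ℕ} (hg : g.2 ≤ n) : g.1 ∉ arcInt g := by
  simp only [arcInt, Finset.mem_image, Finset.mem_Icc, not_exists, not_and]
  exact fun j hj => add_natCast_ne_self (by omega) (by omega)

theorem arcDen_notMem_arcInt {g : ZMod n × ℕ} (hg : g.2 ≤ n) : arcDen g ∉ arcInt g := by
  simp only [arcInt, arcDen, Finset.mem_image, Finset.mem_Icc, not_exists, not_and]
  exact fun j hj h => by have := (add_natCast_inj (by omega) (by omega)).1 h; omega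

theorem admissible_iff_exists_isMaxOn {g : ZMod n × ℕ} (hg : g.2 ≤ n) (σ : ZMod n ≃ Fin n) :
    Admissible σ g ↔ ∃ a ∈ ({g.1, arcDen g} : Finset (ZMod n)), IsMaxOn σ (arcHood g) a := by
  constructor
  · intro hσ
    rcases le_total (σ g.1) (σ (arcDen g)) with hle | hle
    · refine ⟨arcDen g, by simp, isMaxOn_iff.2 fun v hv => ?_⟩
      rcases Finset.mem_insert.1 (arcHood_subset g hv) with rfl | hv
      · exact hle
      rcases Finset.mem_insert.1 hv with rfl | hv
      · exact le_rfl
      rcases hσ v hv with h | h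
      exacts [(h.trans_le hle).le, h.le]
    · refine ⟨g.1, by simp, isMaxOn_iff.2 fun v hv => ?_⟩
      rcases Finset.mem_insert.1 (arcHood_subset g hv) with rfl | hv
      · exact le_rfl
      rcases Finset.mem_insert.1 hv with rfl | hv
      · exact hle
      rcases hσ v hv with h | h
      exacts [h.le, (h.trans_le hle).le]
  · rintro ⟨a, ha, hmax⟩ v hv
    have hva : v ≠ a := by
      rintro rfl
      rcases Finset.mem_insert.1 ha with rfl | ha
      · exact hook_notMem_arcInt hg hv
      · exact arcDen_notMem_arcInt hg (Finset.mem_singleton.1 ha ▸ hv)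
    have hlt : σ v < σ a :=
      (isMaxOn_iff.1 hmax v (arcInt_subset_arcHood g hv)).lt_of_ne (σ.injective.ne hva)
    rcases Finset.mem_insert.1 ha with rfl | ha
    · exact Or.inl hlt
    · exact Or.inr (Finset.mem_singleton.1 ha ▸ hlt)

theorem admissible_lt_hook [NeZero n] {g : ZMod n × ℕ} (h3 : 3 ≤ g.2) (hg : n < g.2)
    {σ : ZMod n ≃ Fin n} (hσ : Admissible σ g) : σ (g.1 + 1) < σ g.1 := by
  have hnext : σ (g.1 + 1) < σ g.1 ∨ σ (g.1 + 1) < σ (arcDen g) := by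
    simpa using hσ _ (mem_arcInt (j := 1) le_rfl (by omega))
  -- the denouement wraps around to `h + ((ℓ - 1) % n)`, which is the hook or an interior vertex
  have hden : arcDen g = g.1 + (((g.2 - 1) % n : ℕ) : ZMod n) := by
    rw [arcDen, ZMod.natCast_mod]
  have hn : 0 < n := Nat.pos_of_ne_zero (NeZero.ne n)
  rcases Nat.eq_zero_or_pos ((g.2 - 1) % n) with hr | hr
  · rw [hden, hr, Nat.cast_zero, add_zero] at hnext
    exact hnext.elim id id
  · have hden_lt : σ (arcDen g) < σ g.1 := by
      have := hσ _ (hden ▸ mem_arcInt hr (by have := Nat.mod_lt (g.2 - 1) hn; omega))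
      exact this.resolve_right (lt_irrefl _)
    exact hnext.elim id (·.trans hden_lt)

end Arcs

section QCount

variable {n : ℕ}

theorem qCount_singleton (g : ZMod n × ℕ) :
    qCount n {g} = Nat.card {σ : ZMod n ≃ Fin n // Admissible σ g} := by
  simp [qCount]

variable [NeZero n]

theorem natCard_equiv_fin : Nat.card (ZMod n ≃ Fin n) = n.factorial := by
  rw [Nat.card_eq_fintype_card, Fintype.card_equiv (ZMod.finEquiv n).symm.toEquiv, ZMod.card]

theorem qCount_le_qCount_of_subset {T T' : Finset (ZMod n × ℕ)} (h : T ⊆ T') :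
    qCount n T' ≤ qCount n T :=
  Nat.card_le_card_of_injective _ (Subtype.impEmbedding _ _ fun _ hσ g hg => hσ g (h hg)).injective

theorem qCount_lt_qCount_of_subset {T T' : Finset (ZMod n × ℕ)} (h : T ⊆ T') (σ : ZMod n ≃ Fin n)
    (hσ : ∀ g ∈ T, Admissible σ g) (hσ' : ¬ ∀ g ∈ T', Admissible σ g) :
    qCount n T' < qCount n T := by
  classical
  simp only [qCount, Nat.card_eq_fintype_card, Fintype.card_subtype]
  refine Finset.card_lt_card ⟨fun τ hτ => ?_, fun hsub => ?_⟩
  · simp only [Finset.mem_filter] at hτ ⊢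
    exact ⟨hτ.1, fun g hg => hτ.2 g (h hg)⟩
  exact hσ' (Finset.mem_filter.1 (hsub (Finset.mem_filter.2 ⟨Finset.mem_univ σ, hσ⟩))).2

theorem mul_qCount_singleton {g : ZMod n × ℕ} (h2 : 2 ≤ g.2) (hg : g.2 ≤ n) :
    g.2 * qCount n {g} = 2 * n.factorial := by
  have hA : ({g.1, arcDen g} : Finset (ZMod n)) ⊆ arcHood g :=
    Finset.insert_subset (hook_mem_arcHood (by omega))
      (Finset.singleton_subset_iff.2 (arcDen_mem_arcHood (by omega)))
  have key := card_mul_card_exists_isMaxOn (β := Fin n) hA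
  rw [card_arcHood hg, Finset.card_pair (hook_ne_arcDen h2 hg), natCard_equiv_fin] at key
  rw [qCount_singleton, ← key]
  exact congrArg _ (Nat.card_congr (Equiv.subtypeEquivRight (admissible_iff_exists_isMaxOn hg)))

theorem two_mul_qCount_singleton_le (hn : 2 ≤ n) {g : ZMod n × ℕ} (h4 : 4 ≤ g.2) :
    2 * qCount n {g} ≤ n.factorial := by
  rcases le_or_gt g.2 n with hg | hg
  · have := mul_qCount_singleton (by omega) hg
    nlinarith
  · have hne : g.1 + 1 ≠ g.1 := by simpa using add_natCast_ne_self (h := g.1) one_pos hn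
    have hpair := card_mul_card_isMaxOn (β := Fin n) (Finset.mem_insert_of_mem
      (Finset.mem_singleton_self g.1) : g.1 ∈ ({g.1 + 1, g.1} : Finset (ZMod n)))
    rw [Finset.card_pair hne, natCard_equiv_fin] at hpair
    rw [← hpair, qCount_singleton]
    refine Nat.mul_le_mul_left 2 (Nat.card_le_card_of_injective _
      (Subtype.impEmbedding _ _ fun σ hσ => isMaxOn_iff.2 fun v hv => ?_).injective)
    rcases Finset.mem_insert.1 hv with rfl | hv
    · exact (admissible_lt_hook (by omega) hg hσ).le
    · rw [Finset.mem_singleton.1 hv]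

theorem qCount_pair_lt (hn : 2 ≤ n) {h h' : ZMod n} (hne : h ≠ h') :
    qCount n {(h, 3), (h', 3)} < qCount n {(h, 3)} := by
  have hInt (x : ZMod n) : arcInt ((x, 3) : ZMod n × ℕ) = {x + 1} := by simp [arcInt]
  obtain ⟨σ, hbot, htop⟩ := (ZMod.finEquiv n).symm.toEquiv.exists_apply_eq_bot_apply_eq_top
    (a := h + 1) (b := h' + 1) (by simpa using hne)
  refine qCount_lt_qCount_of_subset (by simp) σ ?_ ?_
  · simp only [Finset.mem_singleton, forall_eq, Admissible, hInt]
    refine Or.inl (hbot ▸ bot_lt_iff_ne_bot.2 fun h0 => ?_)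
    have hne' : h + 1 ≠ h := by simpa using add_natCast_ne_self (h := h) one_pos hn
    exact hne' (σ.injective (hbot.trans h0.symm))
  · simp only [Finset.mem_insert, Finset.mem_singleton, forall_eq_or_imp, forall_eq, Admissible,
      hInt, htop, not_and_or]
    exact Or.inr (by simp)

end QCount

theorem q_conjecture_equality_case_general (n : ℕ) (hn : 3 ≤ n)
    (T : Finset (ZMod n × ℕ)) (hT : ∀ g ∈ T, 3 ≤ g.2) (hne : T.Nonempty) :
    3 * qCount n T = 2 * Nat.factorial n ↔ ∃ h : ZMod n, T = {(h, 3)} := by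
  have : NeZero n := ⟨by omega⟩
  have hpos := n.factorial_pos
  constructor
  · intro hq
    have hlen : ∀ g ∈ T, g = (g.1, 3) := fun g hg => Prod.ext rfl <| by
      have hlong := two_mul_qCount_singleton_le (by omega) (g := g)
      have hmono := qCount_le_qCount_of_subset (n := n) (Finset.singleton_subset_iff.2 hg)
      have h3 := hT g hg
      omega
    obtain ⟨g, hg⟩ := hne
    refine ⟨g.1, Finset.eq_singleton_iff_unique_mem.2 ⟨hlen g hg ▸ hg, fun g' hg' => ?_⟩⟩
    by_contra hg'g
    have hh : g.1 ≠ g'.1 := fun h => hg'g (by rw [hlen g' hg', ← h])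
    have hsub : {(g.1, 3), (g'.1, 3)} ⊆ T := by
      rw [Finset.insert_subset_iff, Finset.singleton_subset_iff, ← hlen g hg, ← hlen g' hg']
      exact ⟨hg, hg'⟩
    have hmono := qCount_le_qCount_of_subset hsub
    have hlt := qCount_pair_lt (by omega) hh
    have hsingle := mul_qCount_singleton (n := n) (g := (g.1, 3)) (by norm_num) hn
    omega
  · rintro ⟨h, rfl⟩
    simpa using mul_qCount_singleton (n := n) (g := (h, 3)) (by norm_num) hn

/-- equality case: let `n ≥ 3` and let `T` be a nonempty minimal finite
family of arcs (each of length `≥ 3`, and no arc of `T` a subpath of a different arc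
of `T`). Then `3 ⬝ q(T) = 2 ⬝ n!` iff `T` consists of exactly one arc of length `3`. -/
theorem q_conjecture_equality_case (n : ℕ) (hn : 3 ≤ n)
    (T : Finset (ZMod n × ℕ)) (hT : ∀ g ∈ T, 3 ≤ g.2) (hne : T.Nonempty)
    (hmin : ∀ g ∈ T, ∀ g' ∈ T, g ≠ g' → ¬ Subpath g g') :
    3 * qCount n T = 2 * Nat.factorial n ↔ ∃ h : ZMod n, T = {(h, 3)} :=
  q_conjecture_equality_case_general n hn T hT hne
end
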